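/- Every Lie subalgebra of 𝔤 = sl(2,ℂ) ⊕ sl(2,ℂ) that is isomorphic to sl(2,ℂ) is conjugate under SL(2,ℂ) × SL(2,ℂ) to exactly one of the three subalgebras sl(2,ℂ) ⊕ {0}, {0} ⊕ sl(2,ℂ), and the diagonal Δ = {(x,x) : x ∈ sl(2,ℂ)}; in particular these three subalgebras are pairwise non-conjugate. -/

import Mathlib

open Matrix

noncomputable section

abbrev M2 : Type := Matrix (Fin 2) (Fin 2) ℂ

/-- `𝔤 = sl(2,ℂ) ⊕ sl(2,ℂ)` lives inside the product algebra `M2 × M2`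
(with componentwise commutator bracket). -/
abbrev gP : Type := M2 × M2

instance : LieRing gP := LieRing.ofAssociativeRing

instance : LieAlgebra ℂ gP := LieAlgebra.ofAssociativeAlgebra

/-- `H = diag(1,−1)`. -/
def H2 : M2 := Matrix.diagonal ![1, -1]

/-- `E = E₁₂`. -/
def E2 : M2 := Matrix.single 0 1 1

/-- `sl(2,ℂ) ⊕ sl(2,ℂ)` as a subset of `M2 × M2`: pairs of traceless matrices. -/
def sl2sl2 : Set gP := {p | Matrix.trace p.1 = 0 ∧ Matrix.trace p.2 = 0}

/-- `SL(2,ℂ) = {M : det M = 1}`. -/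
def SL2 : Set M2 := {M | M.det = 1}

/-- Conjugacy of subsets of `𝔤` under `SL(2,ℂ) × SL(2,ℂ)`, acting by
`(M,N)·(x,y) = (M x M⁻¹, N y N⁻¹)`. -/
def PConj (a b : Set gP) : Prop :=
  ∃ M ∈ SL2, ∃ N ∈ SL2, (fun p : gP => (M * p.1 * M⁻¹, N * p.2 * N⁻¹)) '' a = b

/-- `sl(2,ℂ) ⊕ {0}`. -/
def Fst : Set gP := {p | Matrix.trace p.1 = 0 ∧ p.2 = 0}

/-- `{0} ⊕ sl(2,ℂ)`. -/
def Snd : Set gP := {p | p.1 = 0 ∧ Matrix.trace p.2 = 0}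

/-- The diagonal `Δ = {(x,x) : x ∈ sl(2,ℂ)}`. -/
def Diag : Set gP := {p | Matrix.trace p.1 = 0 ∧ p.2 = p.1}

def F2 : M2 := Matrix.single 1 0 1

def Eb (i j : Fin 2) : M2 := Matrix.single i j 1

lemma Eb_mul_same (i j k : Fin 2) : Eb i j * Eb j k = Eb i k := by
  simp [Eb, Matrix.single_mul_single_same]

lemma Eb_mul_ne {j k : Fin 2} (h : j ≠ k) (i l : Fin 2) : Eb i j * Eb k l = 0 := by
  simp only [Eb]; exact Matrix.single_mul_single_of_ne (h := h) ..

lemma sandwich (a b c d : Fin 2) (X : M2) : Eb a b * X * Eb c d = X b c • Eb a d := by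
  ext i j
  simp [Eb, Matrix.single, Matrix.mul_apply, Fin.sum_univ_two]
  fin_cases a <;> fin_cases b <;> fin_cases c <;> fin_cases d <;> fin_cases i <;> fin_cases j <;> simp <;> ring

lemma Eb_sum : Eb 0 0 + Eb 1 1 = (1 : M2) := by
  ext i j
  fin_cases i <;> fin_cases j <;> simp [Eb, Matrix.single, Matrix.one_apply]

lemma H2_eq : H2 = Eb 0 0 - Eb 1 1 := by
  ext i j
  fin_cases i <;> fin_cases j <;> simp [H2, Eb, Matrix.single, Matrix.diagonal]

lemma sq_traceless (x : M2) (hx : Matrix.trace x = 0) :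
    x * x = (x 0 0 * x 0 0 + x 0 1 * x 1 0) • (1 : M2) := by
  have h11 : x 1 1 = -x 0 0 := by
    have := Matrix.trace_fin_two x
    rw [hx] at this
    linear_combination -this
  ext i j
  fin_cases i <;> fin_cases j <;>
    simp [Matrix.mul_apply, Fin.sum_univ_two, Matrix.one_apply, h11] <;> ring

lemma two_smul_eq {x y : M2} (h : x + x = y + y) : x = y := by
  have h2 : (2:ℂ) • x = (2:ℂ) • y := by rw [two_smul, two_smul]; exact h
  exact smul_right_injective M2 two_ne_zero h2

lemma self_add_self_eq_zero {x : M2} (h : x + x = 0) : x = 0 := by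
  have := two_smul_eq (y := 0) (by simpa using h); simpa using this

lemma conj_of_eq {P0 : M2} (hdet : P0.det ≠ 0) {s : ℂ} (hs : s ^ 2 = (P0.det)⁻¹)
    {X Y : M2} (hXY : X * P0 = P0 * Y) : X = (s • P0) * Y * (s • P0)⁻¹ := by
  set P : M2 := s • P0 with hPdef
  have detP : P.det = 1 := by
    rw [hPdef, Matrix.det_smul, Fintype.card_fin, hs, inv_mul_cancel₀ hdet]
  have hPinv : P * P⁻¹ = 1 := Matrix.mul_nonsing_inv P (by rw [detP]; exact isUnit_one)
  have h1 : X * P = P * Y := by rw [hPdef, Matrix.mul_smul, Matrix.smul_mul, hXY]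
  calc X = X * (P * P⁻¹) := by rw [hPinv, mul_one]
  _ = (X * P) * P⁻¹ := by rw [mul_assoc]
  _ = P * Y * P⁻¹ := by rw [h1]

lemma triple_conj (h e f : M2)
    (rhe : h * e - e * h = e + e)
    (rhf : h * f - f * h = -(f + f))
    (ref : e * f - f * e = h)
    (hne : e ≠ 0) :
    ∃ P : M2, P.det = 1 ∧ h = P * H2 * P⁻¹ ∧ e = P * E2 * P⁻¹ ∧ f = P * F2 * P⁻¹ := by
  -- trace h = 0
  have trh : Matrix.trace h = 0 := by
    rw [← ref, Matrix.trace_sub, Matrix.trace_mul_comm e f, sub_self]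
  set c : ℂ := h 0 0 * h 0 0 + h 0 1 * h 1 0 with hc
  have hh : h * h = c • 1 := sq_traceless h trh
  -- e*h = -(h*e), h*e = e
  have t1 : c • e - h * e * h = h * e + h * e := by
    calc c • e - h * e * h = (h*h) * e - h * (e * h) := by rw [hh]; noncomm_ring [Matrix.smul_mul]
    _ = h * (h * e - e * h) := by noncomm_ring
    _ = h * (e + e) := by rw [rhe]
    _ = h * e + h * e := by noncomm_ring
  have t2 : h * e * h - c • e = e * h + e * h := by
    calc h * e * h - c • e = (h * e) * h - e * (h*h) := by rw [hh]; noncomm_ring [Matrix.mul_smul]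
    _ = (h * e - e * h) * h := by noncomm_ring
    _ = (e + e) * h := by rw [rhe]
    _ = e * h + e * h := by noncomm_ring
  have anti : e * h = -(h * e) := by
    have : (h * e + e * h) + (h * e + e * h) = 0 := by
      have := congrArg₂ (· + ·) t1 t2
      rw [sub_add_sub_cancel'] at this
      · linear_combination (norm := abel) - this
    have h0 : h * e + e * h = 0 := self_add_self_eq_zero this
    linear_combination (norm := abel) h0
  have he_e : h * e = e := by
    apply two_smul_eq
    calc h*e + h*e = (h*e - e*h) + (h*e + e*h) := by abel
    _ = (e + e) + (h*e + e*h) := by rw [rhe]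
    _ = e + e := by rw [anti]; simp
  have eh : e * h = -e := by rw [anti, he_e]
  -- c = 1
  have hc1 : c = 1 := by
    have : c • e - (-e) = e + e := by
      calc c • e - (-e) = c • e - h * e * h := by rw [he_e, eh]
      _ = e + e := t1.trans (by rw [he_e])
    have : (c - 1) • e = 0 := by
      rw [sub_smul, one_smul]
      linear_combination (norm := abel) this
    rcases smul_eq_zero.mp this with h' | h'
    · linear_combination h'
    · exact absurd h' hne
  rw [hc1, one_smul] at hh
  -- f relations
  have antif : f * h = -(h * f) := by
    have t1 : f - h * f * h = -(h * f + h * f) := by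
      calc f - h * f * h = (h*h) * f - h * (f * h) := by rw [hh]; noncomm_ring
      _ = h * (h * f - f * h) := by noncomm_ring
      _ = h * (-(f + f)) := by rw [rhf]
      _ = -(h * f + h * f) := by noncomm_ring
    have t2 : h * f * h - f = -(f * h + f * h) := by
      calc h * f * h - f = (h * f) * h - f * (h*h) := by rw [hh]; noncomm_ring
      _ = (h * f - f * h) * h := by noncomm_ring
      _ = (-(f + f)) * h := by rw [rhf]
      _ = -(f * h + f * h) := by noncomm_ring
    have : (h * f + f * h) + (h * f + f * h) = 0 := by
      linear_combination (norm := abel) t1 + t2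
    have h0 : h * f + f * h = 0 := self_add_self_eq_zero this
    linear_combination (norm := abel) h0
  have hf_f : h * f = -f := by
    have : h*f + h*f = -f + -f := by
      calc h*f + h*f = (h*f - f*h) + (h*f + f*h) := by abel
      _ = (-(f + f)) + (h*f + f*h) := by rw [rhf]
      _ = -f + -f := by rw [antif]; abel
    exact two_smul_eq this
  have fh : f * h = f := by rw [antif, hf_f, neg_neg]
  -- traces of e and f vanish
  have tre : Matrix.trace e = 0 := by
    have : Matrix.trace (h * e) = Matrix.trace (e * h) := Matrix.trace_mul_comm h e
    rw [he_e, eh] at this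
    simp only [Matrix.trace_neg] at this
    linear_combination this / 2
  have trf : Matrix.trace f = 0 := by
    have : Matrix.trace (h * f) = Matrix.trace (f * h) := Matrix.trace_mul_comm h f
    rw [hf_f, fh] at this
    simp only [Matrix.trace_neg] at this
    linear_combination - this / 2
  -- e*e = 0, f*f = 0
  have trneg1 : Matrix.trace (-1 : M2) ≠ 0 := by
    rw [Matrix.trace_neg, Matrix.trace_one]
    simp [Fintype.card_fin]
  have ee : e * e = 0 := by
    have hsq := sq_traceless e tre
    set ce : ℂ := e 0 0 * e 0 0 + e 0 1 * e 1 0 with hce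
    have : ce • (h + 1) = 0 := by
      have h1 : (e * e) * h = -(e * e) := by
        calc (e*e)*h = e * (e * h) := by noncomm_ring
        _ = -(e * e) := by rw [eh]; noncomm_ring
      rw [hsq] at h1
      rw [smul_add]
      have : (ce • (1:M2)) * h = ce • h := by rw [Matrix.smul_mul, one_mul]
      rw [← this, h1]
      simp
    rcases smul_eq_zero.mp this with h' | h'
    · rw [hsq, h', zero_smul]
    · exfalso
      apply trneg1
      have : h = -1 := by linear_combination (norm := abel) h'
      rw [← this, trh]
  have ff : f * f = 0 := by
    have hsq := sq_traceless f trf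
    set cf : ℂ := f 0 0 * f 0 0 + f 0 1 * f 1 0 with hcf
    have trone : Matrix.trace (1 : M2) ≠ 0 := by
      rw [Matrix.trace_one]; simp [Fintype.card_fin]
    have : cf • (h - 1) = 0 := by
      have h1 : (f * f) * h = f * f := by
        calc (f*f)*h = f * (f * h) := by noncomm_ring
        _ = f * f := by rw [fh]
      rw [hsq] at h1
      rw [smul_sub]
      have : (cf • (1:M2)) * h = cf • h := by rw [Matrix.smul_mul, one_mul]
      rw [← this, h1]
      simp
    rcases smul_eq_zero.mp this with h' | h'
    · rw [hsq, h', zero_smul]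
    · exfalso
      apply trone
      have : h = 1 := by linear_combination (norm := abel) h'
      rw [← this, trh]
  -- pi = e*f is a rank-one idempotent
  have fe_eq : f * e = e * f - h := by linear_combination (norm := abel) - ref
  have pi2 : (e*f)*(e*f) = e*f := by
    have h1 : (e*f)*(e*f) = e*(f*e)*f := by noncomm_ring
    rw [h1, fe_eq]
    calc e*(e*f - h)*f = (e*e)*(f*f) - (e*h)*f := by noncomm_ring
    _ = e*f := by rw [ee, ff, eh]; noncomm_ring
  have fe2 : (f*e)*(f*e) = f*e := by
    have h1 : (f*e)*(f*e) = f*(e*f)*e := by noncomm_ring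
    have ef_eq : e * f = f * e + h := by linear_combination (norm := abel) ref
    rw [h1, ef_eq]
    calc f*(f*e + h)*e = (f*f)*(e*e) + (f*h)*e := by noncomm_ring
    _ = f*e := by rw [ff, ee, fh]; noncomm_ring
  have sum1 : e*f + f*e = 1 := by
    have expand : h*h = (e*f)*(e*f) - e*(f*f)*e - f*(e*e)*f + (f*e)*(f*e) := by
      rw [← ref]; noncomm_ring
    rw [hh, pi2, fe2, ff, ee] at expand
    simp only [mul_zero, zero_mul, sub_zero, add_zero] at expand
    linear_combination (norm := abel) - expand
  have h_eq : h = e*f + e*f - 1 := by linear_combination (norm := abel) - ref - sum1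
  have epi : e*(e*f) = 0 := by rw [← mul_assoc, ee, zero_mul]
  have pif : (e*f)*f = 0 := by rw [mul_assoc, ff, mul_zero]
  have trpi : Matrix.trace (e*f) = 1 := by
    have h2 := congrArg Matrix.trace sum1
    rw [Matrix.trace_add, Matrix.trace_one, Matrix.trace_mul_comm f e] at h2
    have : (Fintype.card (Fin 2) : ℂ) = 2 := by simp
    rw [this] at h2
    linear_combination h2 / 2
  have hj : ∃ j : Fin 2, (e*f) j j ≠ 0 := by
    by_contra hcon
    push_neg at hcon
    rw [Matrix.trace_fin_two, hcon 0, hcon 1] at trpi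
    norm_num at trpi
  obtain ⟨j, hjne⟩ := hj
  set P0 : M2 := (e*f)*Eb j 0 + f*Eb j 1 with hP0
  set R : M2 := Eb 0 j * (e*f) + Eb 1 j * e with hR
  have hE2 : E2 = Eb 0 1 := rfl
  have hF2 : F2 = Eb 1 0 := rfl
  have eP : e * P0 = P0 * E2 := by
    have lhs : e * P0 = (e*f)*Eb j 1 := by
      rw [hP0]
      calc e * ((e*f)*Eb j 0 + f*Eb j 1) = (e*(e*f))*Eb j 0 + (e*f)*Eb j 1 := by noncomm_ring
      _ = (e*f)*Eb j 1 := by rw [epi]; simp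
    have rhs : P0 * E2 = (e*f)*Eb j 1 := by
      rw [hP0, hE2]
      calc ((e*f)*Eb j 0 + f*Eb j 1) * Eb 0 1
          = (e*f)*(Eb j 0 * Eb 0 1) + f*(Eb j 1 * Eb 0 1) := by noncomm_ring
      _ = (e*f)*Eb j 1 := by
          rw [Eb_mul_same, Eb_mul_ne (by decide : (1:Fin 2) ≠ 0)]; simp
    rw [lhs, rhs]
  have fP : f * P0 = P0 * F2 := by
    have lhs : f * P0 = f*Eb j 0 := by
      rw [hP0]
      have fpi : f*(e*f) = f := by
        have h1 : f*(e*f) = (f*e)*f := by noncomm_ring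
        rw [h1, fe_eq]
        calc (e*f - h)*f = e*(f*f) - h*f := by noncomm_ring
        _ = f := by rw [ff, hf_f]; noncomm_ring
      calc f * ((e*f)*Eb j 0 + f*Eb j 1) = (f*(e*f))*Eb j 0 + (f*f)*Eb j 1 := by noncomm_ring
      _ = f*Eb j 0 := by rw [fpi, ff]; simp
    have rhs : P0 * F2 = f*Eb j 0 := by
      rw [hP0, hF2]
      calc ((e*f)*Eb j 0 + f*Eb j 1) * Eb 1 0
          = (e*f)*(Eb j 0 * Eb 1 0) + f*(Eb j 1 * Eb 1 0) := by noncomm_ring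
      _ = f*Eb j 0 := by
          rw [Eb_mul_same, Eb_mul_ne (by decide : (0:Fin 2) ≠ 1)]; simp
    rw [lhs, rhs]
  have hP0H : h * P0 = P0 * H2 := by
    have lhs : h * P0 = (e*f)*Eb j 0 - f*Eb j 1 := by
      rw [h_eq, hP0]
      calc (e*f + e*f - 1) * ((e*f)*Eb j 0 + f*Eb j 1)
          = ((e*f)*(e*f) + (e*f)*(e*f) - (e*f))*Eb j 0
            + ((e*f)*f + (e*f)*f - f)*Eb j 1 := by noncomm_ring
      _ = (e*f)*Eb j 0 - f*Eb j 1 := by rw [pi2, pif]; noncomm_ring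
    have rhs : P0 * H2 = (e*f)*Eb j 0 - f*Eb j 1 := by
      rw [hP0, H2_eq]
      calc ((e*f)*Eb j 0 + f*Eb j 1) * (Eb 0 0 - Eb 1 1)
          = (e*f)*(Eb j 0 * Eb 0 0) - (e*f)*(Eb j 0 * Eb 1 1)
            + (f*(Eb j 1 * Eb 0 0) - f*(Eb j 1 * Eb 1 1)) := by noncomm_ring
      _ = (e*f)*Eb j 0 - f*Eb j 1 := by
          rw [Eb_mul_same, Eb_mul_same, Eb_mul_ne (by decide : (0:Fin 2) ≠ 1),
            Eb_mul_ne (by decide : (1:Fin 2) ≠ 0)]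
          simp
          noncomm_ring
    rw [lhs, rhs]
  have RP : R * P0 = ((e*f) j j) • 1 := by
    rw [hR, hP0]
    calc (Eb 0 j * (e*f) + Eb 1 j * e) * ((e*f)*Eb j 0 + f*Eb j 1)
        = Eb 0 j * ((e*f)*(e*f)) * Eb j 0 + Eb 0 j * ((e*f)*f) * Eb j 1
          + (Eb 1 j * (e*(e*f)) * Eb j 0 + Eb 1 j * (e*f) * Eb j 1) := by noncomm_ring
    _ = Eb 0 j * (e*f) * Eb j 0 + Eb 1 j * (e*f) * Eb j 1 := by
        rw [pi2, pif, epi]; simp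
    _ = (e*f) j j • Eb 0 0 + (e*f) j j • Eb 1 1 := by rw [sandwich, sandwich]
    _ = (e*f) j j • 1 := by rw [← smul_add, Eb_sum]
  have hdet : P0.det ≠ 0 := by
    intro h0
    have hd := congrArg Matrix.det RP
    rw [Matrix.det_mul, h0, mul_zero, Matrix.det_smul, Matrix.det_one] at hd
    rw [Fintype.card_fin] at hd
    have : ((e*f) j j)^2 = 0 := by linear_combination - hd
    exact hjne (pow_eq_zero_iff two_ne_zero |>.mp this)
  obtain ⟨s, hs⟩ := IsAlgClosed.exists_pow_nat_eq (k := ℂ) (P0.det)⁻¹ (n := 2) (by norm_num)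
  refine ⟨s • P0, ?_, ?_, ?_, ?_⟩
  case _ => rw [Matrix.det_smul, Fintype.card_fin, hs, inv_mul_cancel₀ hdet]
  all_goals {
    first
    | (apply conj_of_eq hdet hs hP0H)
    | (apply conj_of_eq hdet hs eP)
    | (apply conj_of_eq hdet hs fP)
  }


lemma SL2_one : (1 : M2) ∈ SL2 := Matrix.det_one

lemma SL2_inv {M : M2} (h : M ∈ SL2) : M⁻¹ ∈ SL2 := by
  show (M⁻¹).det = 1
  rw [Matrix.det_nonsing_inv, show M.det = 1 from h, Ring.inverse_one]

lemma conj_conj_inv {M : M2} (hM : M ∈ SL2) (x : M2) : M⁻¹ * (M * x * M⁻¹) * M⁻¹⁻¹ = x := by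
  have hu : IsUnit M.det := by rw [show M.det = 1 from hM]; exact isUnit_one
  rw [Matrix.nonsing_inv_nonsing_inv M hu]
  calc M⁻¹ * (M * x * M⁻¹) * M = M⁻¹ * M * x * (M⁻¹ * M) := by noncomm_ring
  _ = x := by rw [Matrix.nonsing_inv_mul M hu]; simp

lemma PConj_symm {a b : Set gP} (h : PConj a b) : PConj b a := by
  obtain ⟨M, hM, N, hN, him⟩ := h
  refine ⟨M⁻¹, SL2_inv hM, N⁻¹, SL2_inv hN, ?_⟩
  have hcomp : ((fun p : gP => (M⁻¹ * p.1 * M⁻¹⁻¹, N⁻¹ * p.2 * N⁻¹⁻¹)) ∘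
      (fun p : gP => (M * p.1 * M⁻¹, N * p.2 * N⁻¹))) = id := by
    funext p
    simp [Function.comp, conj_conj_inv hM, conj_conj_inv hN]
  rw [← him, ← Set.image_comp, hcomp, Set.image_id]

lemma PConj_trans {a b c : Set gP} (h1 : PConj a b) (h2 : PConj b c) : PConj a c := by
  obtain ⟨Ma, hMa, Na, hNa, him1⟩ := h1
  obtain ⟨Mb, hMb, Nb, hNb, him2⟩ := h2
  refine ⟨Mb * Ma, ?_, Nb * Na, ?_, ?_⟩
  · show (Mb * Ma).det = 1
    rw [Matrix.det_mul, show Mb.det = 1 from hMb, show Ma.det = 1 from hMa, mul_one]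
  · show (Nb * Na).det = 1
    rw [Matrix.det_mul, show Nb.det = 1 from hNb, show Na.det = 1 from hNa, mul_one]
  · rw [← him2, ← him1, ← Set.image_comp]
    apply Set.image_congr'
    intro p
    simp only [Function.comp]
    have e1 : (Mb * Ma)⁻¹ = Ma⁻¹ * Mb⁻¹ := Matrix.mul_inv_rev Mb Ma
    have e2 : (Nb * Na)⁻¹ = Na⁻¹ * Nb⁻¹ := Matrix.mul_inv_rev Nb Na
    rw [e1, e2]
    refine Prod.ext ?_ ?_ <;> simp only [] <;> noncomm_ring

lemma H2_ne : H2 ≠ 0 := by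
  intro h
  have : H2 0 0 = (0 : M2) 0 0 := by rw [h]
  simp [H2] at this

lemma trH2 : Matrix.trace H2 = 0 := by
  rw [Matrix.trace_fin_two]; simp [H2]

lemma not_PConj_Fst_Snd : ¬ PConj Fst Snd := by
  rintro ⟨M, hM, N, hN, him⟩
  have hmem : ((0 : M2), H2) ∈ Snd := ⟨rfl, trH2⟩
  rw [← him] at hmem
  obtain ⟨p, hp, heq⟩ := hmem
  have h2 : N * p.2 * N⁻¹ = H2 := congrArg Prod.snd heq
  rw [hp.2] at h2
  simp at h2
  exact H2_ne h2.symm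

lemma not_PConj_Fst_Diag : ¬ PConj Fst Diag := by
  rintro ⟨M, hM, N, hN, him⟩
  have hmem : (H2, H2) ∈ Diag := ⟨trH2, rfl⟩
  rw [← him] at hmem
  obtain ⟨p, hp, heq⟩ := hmem
  have h2 : N * p.2 * N⁻¹ = H2 := congrArg Prod.snd heq
  rw [hp.2] at h2
  simp at h2
  exact H2_ne h2.symm

lemma not_PConj_Snd_Diag : ¬ PConj Snd Diag := by
  rintro ⟨M, hM, N, hN, him⟩
  have hmem : (H2, H2) ∈ Diag := ⟨trH2, rfl⟩
  rw [← him] at hmem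
  obtain ⟨p, hp, heq⟩ := hmem
  have h1 : M * p.1 * M⁻¹ = H2 := congrArg Prod.fst heq
  rw [hp.1] at h1
  simp at h1
  exact H2_ne h1.symm

lemma trE2 : Matrix.trace E2 = 0 := by
  rw [Matrix.trace_fin_two]; simp [E2, Matrix.single]

lemma trF2 : Matrix.trace F2 = 0 := by
  rw [Matrix.trace_fin_two]; simp [F2, Matrix.single]

lemma traceless_decomp (y : M2) (hy : Matrix.trace y = 0) :
    y = y 0 0 • H2 + y 0 1 • E2 + y 1 0 • F2 := by
  have h11 : y 1 1 = -y 0 0 := by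
    have := Matrix.trace_fin_two y
    rw [hy] at this
    linear_combination -this
  ext i j
  fin_cases i <;> fin_cases j <;>
    simp [H2, E2, F2, Matrix.single, Matrix.diagonal, h11]

lemma conj_linear (Q : M2) (a b c : ℂ) (X Y Z : M2) :
    Q * (a • X + b • Y + c • Z) * Q⁻¹ =
      a • (Q * X * Q⁻¹) + b • (Q * Y * Q⁻¹) + c • (Q * Z * Q⁻¹) := by
  simp [mul_add, add_mul, Matrix.mul_smul, Matrix.smul_mul]

lemma trace_comb (a b c : ℂ) : Matrix.trace (a • H2 + b • E2 + c • F2) = 0 := by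
  simp [Matrix.trace_add, Matrix.trace_smul, trH2, trE2, trF2]

lemma brHE : H2 * E2 - E2 * H2 = E2 + E2 := by
  ext i j
  fin_cases i <;> fin_cases j <;>
    simp [H2, E2, Matrix.mul_apply, Fin.sum_univ_two, Matrix.single, Matrix.diagonal]

lemma brHF : H2 * F2 - F2 * H2 = -(F2 + F2) := by
  ext i j
  fin_cases i <;> fin_cases j <;>
    simp [H2, F2, Matrix.mul_apply, Fin.sum_univ_two, Matrix.single,
      Matrix.diagonal] <;> ring

lemma brEF : E2 * F2 - F2 * E2 = H2 := by
  ext i j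
  fin_cases i <;> fin_cases j <;>
    simp [H2, E2, F2, Matrix.mul_apply, Fin.sum_univ_two, Matrix.single, Matrix.diagonal]

lemma E2_ne : E2 ≠ 0 := by
  intro h
  have : E2 0 1 = (0 : M2) 0 1 := by rw [h]
  simp [E2, Matrix.single] at this


theorem stmt_18 (S : LieSubalgebra ℂ gP) (hsub : (S : Set gP) ⊆ sl2sl2)
    (hiso : Nonempty (S ≃ₗ⁅ℂ⁆ LieAlgebra.SpecialLinear.sl (Fin 2) ℂ)) :
    ((PConj (S : Set gP) Fst ∧ ¬ PConj (S : Set gP) Snd ∧ ¬ PConj (S : Set gP) Diag) ∨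
      (¬ PConj (S : Set gP) Fst ∧ PConj (S : Set gP) Snd ∧ ¬ PConj (S : Set gP) Diag) ∨
      (¬ PConj (S : Set gP) Fst ∧ ¬ PConj (S : Set gP) Snd ∧ PConj (S : Set gP) Diag)) ∧
    ¬ PConj Fst Snd ∧ ¬ PConj Fst Diag ∧ ¬ PConj Snd Diag := by
  clear hsub
  obtain ⟨iso⟩ := hiso
  set slC := LieAlgebra.SpecialLinear.sl (Fin 2) ℂ with hslC
  have memH : H2 ∈ slC := trH2
  have memE : E2 ∈ slC := trE2
  have memF : F2 ∈ slC := trF2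
  set X : slC := ⟨H2, memH⟩ with hX
  set Y : slC := ⟨E2, memE⟩ with hY
  set Z : slC := ⟨F2, memF⟩ with hZ
  set hS : S := iso.symm X with hhS
  set eS : S := iso.symm Y with heS
  set fS : S := iso.symm Z with hfS
  set hg : gP := (hS : gP) with hhg
  set eg : gP := (eS : gP) with heg
  set fg : gP := (fS : gP) with hfg
  -- bracket relations in slC
  have bXY : ⁅X, Y⁆ = Y + Y := by
    apply Subtype.ext
    rw [LieAlgebra.SpecialLinear.sl_bracket]
    exact brHE
  have bXZ : ⁅X, Z⁆ = -(Z + Z) := by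
    apply Subtype.ext
    rw [LieAlgebra.SpecialLinear.sl_bracket]
    have : ((-(Z + Z) : slC) : M2) = -((Z : M2) + (Z : M2)) := rfl
    rw [this]
    exact brHF
  have bYZ : ⁅Y, Z⁆ = X := by
    apply Subtype.ext
    rw [LieAlgebra.SpecialLinear.sl_bracket]
    exact brEF
  -- transport to S
  have mapbr : ∀ u v : slC, ⁅iso.symm u, iso.symm v⁆ = iso.symm ⁅u, v⁆ := fun u v =>
    (LieEquiv.map_lie iso.symm u v).symm
  have e1 : ∀ u v : slC, iso.symm (u + v) = iso.symm u + iso.symm v := fun u v =>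
    iso.symm.toLinearEquiv.map_add u v
  have e2 : ∀ (a : ℂ) (u : slC), iso.symm (a • u) = a • iso.symm u := fun a u =>
    iso.symm.toLinearEquiv.map_smul a u
  have e3 : ∀ u : slC, iso.symm (-u) = -(iso.symm u) := fun u =>
    iso.symm.toLinearEquiv.map_neg u
  have bS1 : ⁅hS, eS⁆ = eS + eS := by
    rw [hhS, heS, mapbr, bXY, e1]
  have bS2 : ⁅hS, fS⁆ = -(fS + fS) := by
    rw [hhS, hfS, mapbr, bXZ, e3, e1]
  have bS3 : ⁅eS, fS⁆ = hS := by rw [heS, hfS, mapbr, bYZ]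
  -- transport to gP
  have bg1 : ⁅hg, eg⁆ = eg + eg := by
    rw [hhg, heg, ← LieSubalgebra.coe_bracket, bS1]; rfl
  have bg2 : ⁅hg, fg⁆ = -(fg + fg) := by
    rw [hhg, hfg, ← LieSubalgebra.coe_bracket, bS2]; rfl
  have bg3 : ⁅eg, fg⁆ = hg := by
    rw [heg, hfg, ← LieSubalgebra.coe_bracket, bS3]
  -- componentwise
  have r1a : hg.1 * eg.1 - eg.1 * hg.1 = eg.1 + eg.1 := by
    rw [Ring.lie_def] at bg1
    simpa using congrArg Prod.fst bg1
  have r1b : hg.2 * eg.2 - eg.2 * hg.2 = eg.2 + eg.2 := by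
    rw [Ring.lie_def] at bg1
    simpa using congrArg Prod.snd bg1
  have r2a : hg.1 * fg.1 - fg.1 * hg.1 = -(fg.1 + fg.1) := by
    rw [Ring.lie_def] at bg2
    simpa using congrArg Prod.fst bg2
  have r2b : hg.2 * fg.2 - fg.2 * hg.2 = -(fg.2 + fg.2) := by
    rw [Ring.lie_def] at bg2
    simpa using congrArg Prod.snd bg2
  have r3a : eg.1 * fg.1 - fg.1 * eg.1 = hg.1 := by
    rw [Ring.lie_def] at bg3
    simpa using congrArg Prod.fst bg3
  have r3b : eg.2 * fg.2 - fg.2 * eg.2 = hg.2 := by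
    rw [Ring.lie_def] at bg3
    simpa using congrArg Prod.snd bg3
  -- e nonzero
  have egne : eg ≠ 0 := by
    intro hz
    have hz' : eS = 0 := ZeroMemClass.coe_eq_zero.mp hz
    have : Y = 0 := by
      have := congrArg iso hz'
      rw [heS, iso.apply_symm_apply] at this
      rw [this]
      exact iso.toLinearEquiv.map_zero
    exact E2_ne (congrArg Subtype.val this)
  -- spanning
  have spanS : ∀ z : S, ∃ a b c : ℂ, (z : gP) = a • hg + b • eg + c • fg := by
    intro z
    set w := iso z with hw
    set a := (w : M2) 0 0 with ha
    set b := (w : M2) 0 1 with hb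
    set c := (w : M2) 1 0 with hc
    refine ⟨a, b, c, ?_⟩
    have hwd : w = a • X + b • Y + c • Z := by
      apply Subtype.ext
      exact traceless_decomp (w : M2) w.2
    have hz : z = iso.symm w := (iso.symm_apply_apply z).symm
    rw [hz, hwd, e1, e1, e2, e2, e2]
    rfl
  have memcomb : ∀ a b c : ℂ, (a • hg + b • eg + c • fg) ∈ (S : Set gP) := by
    intro a b c
    have : ((a • hS + b • eS + c • fS : S) : gP) = a • hg + b • eg + c • fg := rfl
    rw [← this]
    exact SetLike.coe_mem _
  -- the three negations are fixed
  refine ⟨?_, not_PConj_Fst_Snd, not_PConj_Fst_Diag, not_PConj_Snd_Diag⟩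
  by_cases h1 : eg.1 = 0
  · -- second factor case : S conjugate to Snd
    have hgh1 : hg.1 = 0 := by rw [← r3a, h1]; simp
    have hgf1 : fg.1 = 0 := by
      apply self_add_self_eq_zero
      have h := r2a
      rw [hgh1] at h
      have h0 : (0 : M2) = -(fg.1 + fg.1) := by simpa using h
      exact neg_eq_zero.mp h0.symm
    have eg2ne : eg.2 ≠ 0 := fun hz => egne (Prod.ext h1 hz)
    obtain ⟨Q, hQdet, cH, cE, cF⟩ := triple_conj hg.2 eg.2 fg.2 r1b r2b r3b eg2ne
    have him : (fun p : gP => ((1:M2) * p.1 * (1:M2)⁻¹, Q * p.2 * Q⁻¹)) '' Snd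
        = (S : Set gP) := by
      ext z
      constructor
      · rintro ⟨p, ⟨hp1, hp2⟩, rfl⟩
        have key : ((1:M2) * p.1 * (1:M2)⁻¹, Q * p.2 * Q⁻¹)
            = (p.2 0 0) • hg + (p.2 0 1) • eg + (p.2 1 0) • fg := by
          refine Prod.ext ?_ ?_
          · show (1:M2) * p.1 * (1:M2)⁻¹
              = (p.2 0 0) • hg.1 + (p.2 0 1) • eg.1 + (p.2 1 0) • fg.1
            rw [hp1, hgh1, h1, hgf1]
            simp
          · show Q * p.2 * Q⁻¹
              = (p.2 0 0) • hg.2 + (p.2 0 1) • eg.2 + (p.2 1 0) • fg.2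
            conv_lhs => rw [traceless_decomp p.2 hp2]
            rw [conj_linear, ← cH, ← cE, ← cF]
        show ((1:M2) * p.1 * (1:M2)⁻¹, Q * p.2 * Q⁻¹) ∈ (S : Set gP)
        rw [key]
        exact memcomb _ _ _
      · intro hz
        obtain ⟨a, b, c, hdec⟩ := spanS ⟨z, hz⟩
        have hz1 : z.1 = a • hg.1 + b • eg.1 + c • fg.1 := by
          simpa using congrArg Prod.fst hdec
        have hz2 : z.2 = a • hg.2 + b • eg.2 + c • fg.2 := by
          simpa using congrArg Prod.snd hdec
        refine ⟨(0, a • H2 + b • E2 + c • F2), ⟨rfl, trace_comb a b c⟩, ?_⟩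
        refine Prod.ext ?_ ?_
        · show (1:M2) * 0 * (1:M2)⁻¹ = z.1
          rw [hz1, hgh1, h1, hgf1]
          simp
        · show Q * (a • H2 + b • E2 + c • F2) * Q⁻¹ = z.2
          rw [conj_linear, ← cH, ← cE, ← cF, hz2]
    have hPS : PConj (S : Set gP) Snd := PConj_symm ⟨1, SL2_one, Q, hQdet, him⟩
    refine Or.inr (Or.inl ⟨?_, hPS, ?_⟩)
    · intro hF
      exact not_PConj_Fst_Snd (PConj_trans (PConj_symm hF) hPS)
    · intro hD
      exact not_PConj_Snd_Diag (PConj_trans (PConj_symm hPS) hD)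
  · obtain ⟨P, hPdet, cH1, cE1, cF1⟩ := triple_conj hg.1 eg.1 fg.1 r1a r2a r3a h1
    by_cases h2 : eg.2 = 0
    · -- first factor case : S conjugate to Fst
      have hgh2 : hg.2 = 0 := by rw [← r3b, h2]; simp
      have hgf2 : fg.2 = 0 := by
        apply self_add_self_eq_zero
        have h := r2b
        rw [hgh2] at h
        have h0 : (0 : M2) = -(fg.2 + fg.2) := by simpa using h
        exact neg_eq_zero.mp h0.symm
      have him : (fun p : gP => (P * p.1 * P⁻¹, (1:M2) * p.2 * (1:M2)⁻¹)) '' Fst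
          = (S : Set gP) := by
        ext z
        constructor
        · rintro ⟨p, ⟨hp1, hp2⟩, rfl⟩
          have key : (P * p.1 * P⁻¹, (1:M2) * p.2 * (1:M2)⁻¹)
              = (p.1 0 0) • hg + (p.1 0 1) • eg + (p.1 1 0) • fg := by
            refine Prod.ext ?_ ?_
            · show P * p.1 * P⁻¹
                = (p.1 0 0) • hg.1 + (p.1 0 1) • eg.1 + (p.1 1 0) • fg.1
              conv_lhs => rw [traceless_decomp p.1 hp1]
              rw [conj_linear, ← cH1, ← cE1, ← cF1]
            · show (1:M2) * p.2 * (1:M2)⁻¹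
                = (p.1 0 0) • hg.2 + (p.1 0 1) • eg.2 + (p.1 1 0) • fg.2
              rw [hp2, hgh2, h2, hgf2]
              simp
          show (P * p.1 * P⁻¹, (1:M2) * p.2 * (1:M2)⁻¹) ∈ (S : Set gP)
          rw [key]
          exact memcomb _ _ _
        · intro hz
          obtain ⟨a, b, c, hdec⟩ := spanS ⟨z, hz⟩
          have hz1 : z.1 = a • hg.1 + b • eg.1 + c • fg.1 := by
            simpa using congrArg Prod.fst hdec
          have hz2 : z.2 = a • hg.2 + b • eg.2 + c • fg.2 := by
            simpa using congrArg Prod.snd hdec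
          refine ⟨(a • H2 + b • E2 + c • F2, 0), ⟨trace_comb a b c, rfl⟩, ?_⟩
          refine Prod.ext ?_ ?_
          · show P * (a • H2 + b • E2 + c • F2) * P⁻¹ = z.1
            rw [conj_linear, ← cH1, ← cE1, ← cF1, hz1]
          · show (1:M2) * 0 * (1:M2)⁻¹ = z.2
            rw [hz2, hgh2, h2, hgf2]
            simp
      have hPF : PConj (S : Set gP) Fst := PConj_symm ⟨P, hPdet, 1, SL2_one, him⟩
      refine Or.inl ⟨hPF, ?_, ?_⟩
      · intro hSn
        exact not_PConj_Fst_Snd (PConj_trans (PConj_symm hPF) hSn)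
      · intro hD
        exact not_PConj_Fst_Diag (PConj_trans (PConj_symm hPF) hD)
    · -- diagonal case
      obtain ⟨Q, hQdet, cH2, cE2, cF2⟩ := triple_conj hg.2 eg.2 fg.2 r1b r2b r3b h2
      have him : (fun p : gP => (P * p.1 * P⁻¹, Q * p.2 * Q⁻¹)) '' Diag
          = (S : Set gP) := by
        ext z
        constructor
        · rintro ⟨p, ⟨hp1, hp2⟩, rfl⟩
          have key : (P * p.1 * P⁻¹, Q * p.2 * Q⁻¹)
              = (p.1 0 0) • hg + (p.1 0 1) • eg + (p.1 1 0) • fg := by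
            refine Prod.ext ?_ ?_
            · show P * p.1 * P⁻¹
                = (p.1 0 0) • hg.1 + (p.1 0 1) • eg.1 + (p.1 1 0) • fg.1
              conv_lhs => rw [traceless_decomp p.1 hp1]
              rw [conj_linear, ← cH1, ← cE1, ← cF1]
            · show Q * p.2 * Q⁻¹
                = (p.1 0 0) • hg.2 + (p.1 0 1) • eg.2 + (p.1 1 0) • fg.2
              conv_lhs => rw [hp2, traceless_decomp p.1 hp1]
              rw [conj_linear, ← cH2, ← cE2, ← cF2]
          show (P * p.1 * P⁻¹, Q * p.2 * Q⁻¹) ∈ (S : Set gP)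
          rw [key]
          exact memcomb _ _ _
        · intro hz
          obtain ⟨a, b, c, hdec⟩ := spanS ⟨z, hz⟩
          have hz1 : z.1 = a • hg.1 + b • eg.1 + c • fg.1 := by
            simpa using congrArg Prod.fst hdec
          have hz2 : z.2 = a • hg.2 + b • eg.2 + c • fg.2 := by
            simpa using congrArg Prod.snd hdec
          refine ⟨(a • H2 + b • E2 + c • F2, a • H2 + b • E2 + c • F2),
            ⟨trace_comb a b c, rfl⟩, ?_⟩
          refine Prod.ext ?_ ?_
          · show P * (a • H2 + b • E2 + c • F2) * P⁻¹ = z.1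
            rw [conj_linear, ← cH1, ← cE1, ← cF1, hz1]
          · show Q * (a • H2 + b • E2 + c • F2) * Q⁻¹ = z.2
            rw [conj_linear, ← cH2, ← cE2, ← cF2, hz2]
      have hPD : PConj (S : Set gP) Diag := PConj_symm ⟨P, hPdet, Q, hQdet, him⟩
      refine Or.inr (Or.inr ⟨?_, ?_, hPD⟩)
      · intro hF
        exact not_PConj_Fst_Diag (PConj_trans (PConj_symm hF) hPD)
      · intro hSn
        exact not_PConj_Snd_Diag (PConj_trans (PConj_symm hSn) hPD)
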